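/- Lacunary counterexample: Let k ≥ 1 and define on (0,1) the function g(x) := Σ_{Q ⊂ (0,1) dyadic, |Q| ≥ 2^{−k}} (1_{Q^l}(x) − 1_{Q^r}(x)), where Q^l, Q^r are the left and right dyadic halves of Q. Then ‖g‖_{L²(0,1)} = √k, while the dyadic average extension u(t,x) := ⟨g⟩_Q for (t,x) in the Whitney region W_Q satisfies C(∇u)(x) ≳ k for all x ∈ (0,1), where C is the Carleson functional applied to the jump measure ∇u. Consequently ‖C(∇u)‖_{L²} / ‖g‖_{L²} ≳ √k is unbounded in k. -/

import Mathlib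

/-!
The layer `haarLayer i = Σ_{|Q| = 2^{-i}} h_Q` equals `(-1)^n` on the dyadic interval
`I(i+1, n)` and vanishes off `[0,1)`. Integrated against `f` it gives
`Σ_Q (∫_{Q^l} f - ∫_{Q^r} f)`; coarser layers are constant on `Q`, so they are orthogonal to it,
and the layers are orthonormal: `‖g‖₂² = k`.

On `I(a, b)` with `a ≤ k + 1` the layers `i < a` are constant and the others have mean zero, so
`⟨g⟩_{I(a,b)} = Σ_{d < a-1} (-1)^⌊b / 2^d⌋`: passing from the parent to `I(a, b)` adds exactly
the term `(-1)^b`. Every interface at the levels `2, …, k+1` thus carries jump mass `2^{-a}`,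
each of these `k` levels contributes `1` to the Carleson box over `[0,1)`, and `C(∇u) ≥ k` on
`(0,1)`.
-/

open MeasureTheory Set ENNReal

noncomputable section

/-- The dyadic subinterval of `[0,1)` of depth `i` at position `j`. -/
def dyI (i j : ℕ) : Set ℝ := Set.Ico ((j : ℝ) / 2 ^ i) (((j : ℝ) + 1) / 2 ^ i)

/-- The lacunary function `g = Σ_{Q ⊂ (0,1) dyadic, |Q| ≥ 2^{−k}} (1_{Q^l} − 1_{Q^r})`. -/
def lacg (k : ℕ) (x : ℝ) : ℝ :=
  ∑ i ∈ Finset.Icc 1 k, ∑ j ∈ Finset.range (2 ^ i),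
    ((dyI (i+1) (2*j)).indicator (fun _ => (1 : ℝ)) x -
      (dyI (i+1) (2*j+1)).indicator (fun _ => (1 : ℝ)) x)

/-- The dyadic average `⟨g⟩_{I(i,j)}`. -/
def avgI (k i j : ℕ) : ℝ := ⨍ y in dyI i j, lacg k y

/-- The mass `|⟨g⟩_{Q'} − ⟨g⟩_{Q'_parent}| |Q'|` of the jump of the dyadic average extension
of `lacg k` across the interface above the dyadic interval `Q' = I(i,j)`. -/
def jumpMass (k i j : ℕ) : ℝ≥0∞ :=
  ENNReal.ofReal (|avgI k i j - avgI k (i-1) (j/2)| * 2 ^ (-(i : ℤ)))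

/-- The (dyadic) Carleson functional of the jump measure `∇u` of the dyadic average
extension `u` of `lacg k`: `sup_{Q ∋ x} |Q|⁻¹ |∇u|(Q̂)`. -/
def carlesonLac (k : ℕ) (x : ℝ) : ℝ≥0∞ :=
  ⨆ (i : ℕ) (j : ℕ) (_ : x ∈ dyI i j),
    (2 : ℝ≥0∞) ^ i *
      ∑' p : {p : ℕ × ℕ // i < p.1 ∧ dyI p.1 p.2 ⊆ dyI i j}, jumpMass k p.val.1 p.val.2

namespace Lacunary

theorem measurableSet_dyI (i j : ℕ) : MeasurableSet (dyI i j) := measurableSet_Ico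

theorem volume_dyI (i j : ℕ) : volume (dyI i j) = ENNReal.ofReal ((2 : ℝ) ^ i)⁻¹ := by
  rw [dyI, Real.volume_Ico]
  congr 1
  field_simp
  ring

theorem measureReal_dyI (i j : ℕ) : volume.real (dyI i j) = ((2 : ℝ) ^ i)⁻¹ := by
  rw [measureReal_def, volume_dyI, ENNReal.toReal_ofReal (by positivity)]

theorem dyI_zero_zero : dyI 0 0 = Ico (0 : ℝ) 1 := by
  simp [dyI]

theorem dyI_subset_dyI_div {a a' : ℕ} (h : a ≤ a') (n : ℕ) :
    dyI a' n ⊆ dyI a (n / 2 ^ (a' - a)) := by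
  obtain ⟨d, rfl⟩ := Nat.exists_eq_add_of_le h
  rw [Nat.add_sub_cancel_left]
  set q := n / 2 ^ d
  have hq : (q : ℝ) * 2 ^ d ≤ n := by exact_mod_cast Nat.div_mul_le_self n _
  have hq' : (n : ℝ) + 1 ≤ (q + 1) * 2 ^ d := by
    have : n < q * 2 ^ d + 2 ^ d := Nat.lt_div_mul_add (by positivity)
    exact_mod_cast (show n + 1 ≤ (q + 1) * 2 ^ d by rw [add_mul, one_mul]; omega)
  rintro x ⟨h₁, h₂⟩
  have hd : (0 : ℝ) < 2 ^ d := by positivity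
  rw [pow_add] at h₁ h₂
  constructor
  · calc (q : ℝ) / 2 ^ a = q * 2 ^ d / (2 ^ a * 2 ^ d) := by field_simp
      _ ≤ n / (2 ^ a * 2 ^ d) := by gcongr
      _ ≤ x := h₁
  · calc x < (n + 1) / (2 ^ a * 2 ^ d) := h₂
      _ ≤ (q + 1) * 2 ^ d / (2 ^ a * 2 ^ d) := by gcongr
      _ = (q + 1) / 2 ^ a := by field_simp

theorem eq_of_mem_dyI {a m n : ℕ} {x : ℝ} (hm : x ∈ dyI a m) (hn : x ∈ dyI a n) :
    m = n := by
  have key : ∀ {m n : ℕ}, x ∈ dyI a m → x ∈ dyI a n → m < n → False := by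
    rintro m n ⟨-, hm⟩ ⟨hn, -⟩ hmn
    have : ((m : ℝ) + 1) / 2 ^ a ≤ n / 2 ^ a := by gcongr; exact_mod_cast hmn
    linarith
  by_contra hne
  rcases Nat.lt_or_gt_of_ne hne with h | h
  exacts [key hm hn h, key hn hm h]

theorem dyI_subset_Ico {i n : ℕ} (hn : n < 2 ^ i) : dyI i n ⊆ Ico (0 : ℝ) 1 := by
  simpa [Nat.div_eq_of_lt hn, dyI_zero_zero] using dyI_subset_dyI_div (Nat.zero_le i) n

theorem measureReal_dyI_inter_dyI {a a' : ℕ} (h : a ≤ a') (b m : ℕ) :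
    volume.real (dyI a b ∩ dyI a' m) =
      if m / 2 ^ (a' - a) = b then ((2 : ℝ) ^ a')⁻¹ else 0 := by
  split_ifs with he
  · rw [inter_eq_self_of_subset_right (he ▸ dyI_subset_dyI_div h m), measureReal_dyI]
  · suffices dyI a b ∩ dyI a' m = ∅ by simp [this]
    refine eq_empty_of_forall_notMem fun x ⟨hb, hm⟩ => he ?_
    exact eq_of_mem_dyI (dyI_subset_dyI_div h m hm) hb

theorem two_mul_add_one_div_two_pow {d : ℕ} (hd : d ≠ 0) (j : ℕ) :
    (2 * j + 1) / 2 ^ d = 2 * j / 2 ^ d := by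
  obtain ⟨d, rfl⟩ := Nat.exists_eq_succ_of_ne_zero hd
  rw [pow_succ', ← Nat.div_div_eq_div_mul, ← Nat.div_div_eq_div_mul]
  congr 1
  omega

def haarLayer (i : ℕ) (x : ℝ) : ℝ :=
  ∑ j ∈ Finset.range (2 ^ i),
    ((dyI (i + 1) (2 * j)).indicator (fun _ => (1 : ℝ)) x -
      (dyI (i + 1) (2 * j + 1)).indicator (fun _ => (1 : ℝ)) x)

theorem lacg_eq_sum_haarLayer (k : ℕ) :
    lacg k = fun x => ∑ i ∈ Finset.Icc 1 k, haarLayer i x := rfl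

theorem haarLayer_mul_eq (i : ℕ) (f : ℝ → ℝ) (x : ℝ) :
    haarLayer i x * f x = ∑ j ∈ Finset.range (2 ^ i),
      ((dyI (i + 1) (2 * j)).indicator f x - (dyI (i + 1) (2 * j + 1)).indicator f x) := by
  simp only [haarLayer, Finset.sum_mul, sub_mul, ← indicator_mul_left, one_mul]

section Measure

variable {μ : Measure ℝ} {f : ℝ → ℝ}

theorem integrable_haarLayer_mul (i : ℕ) (hf : Integrable f μ) :
    Integrable (fun x => haarLayer i x * f x) μ := by
  simp_rw [haarLayer_mul_eq]
  exact integrable_finsetSum _ fun j _ =>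
    (hf.indicator (measurableSet_dyI _ _)).sub (hf.indicator (measurableSet_dyI _ _))

theorem integral_haarLayer_mul (i : ℕ) (hf : Integrable f μ) :
    ∫ x, haarLayer i x * f x ∂μ = ∑ j ∈ Finset.range (2 ^ i),
      ((∫ x in dyI (i + 1) (2 * j), f x ∂μ) - ∫ x in dyI (i + 1) (2 * j + 1), f x ∂μ) := by
  simp_rw [haarLayer_mul_eq]
  rw [integral_finsetSum _ fun j _ => ?_]
  · refine Finset.sum_congr rfl fun j _ => ?_
    rw [integral_sub (hf.indicator (measurableSet_dyI _ _)) (hf.indicator (measurableSet_dyI _ _)),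
      integral_indicator (measurableSet_dyI _ _), integral_indicator (measurableSet_dyI _ _)]
  · exact (hf.indicator (measurableSet_dyI _ _)).sub (hf.indicator (measurableSet_dyI _ _))

end Measure

theorem integrable_haarLayer (i : ℕ) : Integrable (haarLayer i) :=
  integrable_finsetSum _ fun j _ =>
    ((integrable_indicator_iff (measurableSet_dyI _ _)).2
        (integrableOn_const (by simp [volume_dyI]))).sub
      ((integrable_indicator_iff (measurableSet_dyI _ _)).2
        (integrableOn_const (by simp [volume_dyI])))

theorem haarLayer_eq_zero_of_notMem {x : ℝ} (hx : x ∉ Ico (0 : ℝ) 1) (i : ℕ) :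
    haarLayer i x = 0 := by
  refine Finset.sum_eq_zero fun j hj => ?_
  have : 2 * j + 1 < 2 ^ (i + 1) := by rw [Finset.mem_range] at hj; rw [pow_succ]; omega
  rw [indicator_of_notMem fun h => hx (dyI_subset_Ico (by omega) h),
    indicator_of_notMem fun h => hx (dyI_subset_Ico this h), sub_self]

theorem haarLayer_eq_neg_one_pow {i n : ℕ} (hn : n < 2 ^ (i + 1)) {x : ℝ}
    (hx : x ∈ dyI (i + 1) n) :
    haarLayer i x = (-1) ^ n := by
  have hne : ∀ m ≠ n, (dyI (i + 1) m).indicator (fun _ => (1 : ℝ)) x = 0 := fun m hm =>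
    indicator_of_notMem (fun h => hm (eq_of_mem_dyI h hx)) _
  rw [haarLayer, Finset.sum_eq_single (n / 2)]
  · rcases Nat.even_or_odd' n with ⟨m, rfl | rfl⟩
    · rw [hne (2 * (2 * m / 2) + 1) (by omega), show 2 * m / 2 = m by omega,
        indicator_of_mem hx, pow_mul]
      simp
    · rw [hne (2 * ((2 * m + 1) / 2)) (by omega), show (2 * m + 1) / 2 = m by omega,
        indicator_of_mem hx, pow_succ, pow_mul]
      simp
  · intro j _ hj
    rw [hne _ (by omega), hne _ (by omega), sub_self]
  · intro h
    rw [Finset.mem_range, not_lt] at h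
    rw [pow_succ] at hn
    omega

theorem setIntegral_haarLayer_of_le {a i : ℕ} (h : a ≤ i) (b : ℕ) :
    ∫ x in dyI a b, haarLayer i x = 0 := by
  have hfin : volume (dyI a b) ≠ ⊤ := by simp [volume_dyI]
  have := integral_haarLayer_mul i (μ := volume.restrict (dyI a b)) (f := fun _ => 1)
    (integrableOn_const hfin)
  simp only [mul_one] at this
  rw [this]
  refine Finset.sum_eq_zero fun j _ => ?_
  simp only [integral_const, smul_eq_mul, mul_one, measureReal_restrict_apply_univ,
    measureReal_restrict_apply (measurableSet_dyI _ _)]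
  have hd : i + 1 - a ≠ 0 := by omega
  rw [inter_comm, inter_comm (dyI _ (2 * j + 1)), measureReal_dyI_inter_dyI (by omega),
    measureReal_dyI_inter_dyI (by omega), two_mul_add_one_div_two_pow hd, sub_self]

theorem setIntegral_haarLayer_of_lt {a i b : ℕ} (h : i < a) (hb : b < 2 ^ a) :
    ∫ x in dyI a b, haarLayer i x = (-1) ^ (b / 2 ^ (a - (i + 1))) * ((2 : ℝ) ^ a)⁻¹ := by
  have hlt : b / 2 ^ (a - (i + 1)) < 2 ^ (i + 1) := by
    rw [Nat.div_lt_iff_lt_mul (by positivity), ← pow_add, Nat.add_sub_cancel' h]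
    exact hb
  rw [setIntegral_congr_fun (measurableSet_dyI a b)
      fun x hx => haarLayer_eq_neg_one_pow hlt (dyI_subset_dyI_div h b hx),
    setIntegral_const, measureReal_dyI, smul_eq_mul, mul_comm]

theorem integral_haarLayer_mul_haarLayer_of_le {i m : ℕ} (h : i ≤ m) :
    ∫ x, haarLayer m x * haarLayer i x = if i = m then 1 else 0 := by
  rw [integral_haarLayer_mul m (integrable_haarLayer i)]
  have hlt : ∀ j ∈ Finset.range (2 ^ m), 2 * j + 1 < 2 ^ (m + 1) := fun j hj => by
    rw [Finset.mem_range] at hj; rw [pow_succ]; omega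
  rw [Finset.sum_congr rfl fun j hj => by
    rw [setIntegral_haarLayer_of_lt (by omega) (by linarith [hlt j hj]),
      setIntegral_haarLayer_of_lt (by omega) (hlt j hj)]]
  split_ifs with him
  · subst him
    simp only [Nat.sub_self, pow_zero, Nat.div_one, pow_succ _ (2 * _), pow_mul, neg_one_sq,
      one_pow, Finset.sum_const, Finset.card_range, nsmul_eq_mul, Nat.cast_pow, Nat.cast_ofNat]
    field_simp
    ring
  · simp only [Nat.add_sub_add_right, two_mul_add_one_div_two_pow (show m - i ≠ 0 by omega),
      sub_self, Finset.sum_const_zero]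

theorem integral_haarLayer_mul_haarLayer (i m : ℕ) :
    ∫ x, haarLayer m x * haarLayer i x = if i = m then 1 else 0 := by
  rcases le_total i m with h | h
  · exact integral_haarLayer_mul_haarLayer_of_le h
  · simp_rw [mul_comm (haarLayer m _), integral_haarLayer_mul_haarLayer_of_le h, eq_comm]

theorem lacg_eq_zero_of_notMem {x : ℝ} (hx : x ∉ Ico (0 : ℝ) 1) (k : ℕ) : lacg k x = 0 :=
  Finset.sum_eq_zero fun i _ => haarLayer_eq_zero_of_notMem hx i

theorem integral_lacg_sq (k : ℕ) : ∫ x, lacg k x ^ 2 = k := by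
  simp_rw [sq, lacg_eq_sum_haarLayer, Finset.sum_mul_sum]
  rw [integral_finsetSum _ fun i _ =>
    integrable_finsetSum _ fun m _ => integrable_haarLayer_mul i (integrable_haarLayer m)]
  simp_rw [integral_finsetSum _ fun m _ => integrable_haarLayer_mul _ (integrable_haarLayer m),
    integral_haarLayer_mul_haarLayer, Finset.sum_ite_eq']
  simp +contextual

theorem setIntegral_Ioo_lacg_sq (k : ℕ) : ∫ x in Ioo (0 : ℝ) 1, lacg k x ^ 2 = k := by
  rw [← integral_Ico_eq_integral_Ioo, setIntegral_eq_integral_of_forall_compl_eq_zero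
    fun x hx => by rw [lacg_eq_zero_of_notMem hx, zero_pow two_ne_zero], integral_lacg_sq]

theorem setIntegral_lacg {k a b : ℕ} (ha : a ≤ k + 1) (hb : b < 2 ^ a) :
    ∫ x in dyI a b, lacg k x =
      (∑ d ∈ Finset.range (a - 1), (-1) ^ (b / 2 ^ d)) * ((2 : ℝ) ^ a)⁻¹ := by
  rw [lacg_eq_sum_haarLayer, integral_finsetSum _ fun i _ => (integrable_haarLayer i).integrableOn]
  have hterm : ∀ i ∈ Finset.Icc 1 k, ∫ x in dyI a b, haarLayer i x =
      if i < a then (-1) ^ (b / 2 ^ (a - (i + 1))) * ((2 : ℝ) ^ a)⁻¹ else 0 := fun i _ => by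
    split_ifs with h
    exacts [setIntegral_haarLayer_of_lt h hb, setIntegral_haarLayer_of_le (not_lt.1 h) b]
  have hlevels : (Finset.Icc 1 k).filter (· < a) = Finset.Ico 1 a := by
    ext i; simp only [Finset.mem_filter, Finset.mem_Icc, Finset.mem_Ico]; omega
  rw [Finset.sum_congr rfl hterm, ← Finset.sum_filter, hlevels, ← Finset.sum_mul,
    Finset.sum_Ico_eq_sum_range, ← Finset.sum_range_reflect (fun d => (-1 : ℝ) ^ (b / 2 ^ d))]
  congr 1
  refine Finset.sum_congr rfl fun d _ => ?_
  congr 3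
  omega

theorem avgI_eq {k a b : ℕ} (ha : a ≤ k + 1) (hb : b < 2 ^ a) :
    avgI k a b = ∑ d ∈ Finset.range (a - 1), (-1) ^ (b / 2 ^ d) := by
  rw [avgI, setAverage_eq, measureReal_dyI, inv_inv, smul_eq_mul, setIntegral_lacg ha hb]
  field_simp

theorem avgI_sub_avgI_div_two {k i j : ℕ} (hi : i + 2 ≤ k + 1) (hj : j < 2 ^ (i + 2)) :
    avgI k (i + 2) j - avgI k (i + 1) (j / 2) = (-1) ^ j := by
  have hj2 : j / 2 < 2 ^ (i + 1) := by rw [pow_succ] at hj; omega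
  rw [avgI_eq hi hj, avgI_eq (by omega) hj2, Nat.add_sub_cancel,
    show i + 2 - 1 = i + 1 from rfl, Finset.sum_range_succ']
  simp [Nat.div_div_eq_div_mul, pow_succ']

theorem jumpMass_eq {k i j : ℕ} (h2 : 2 ≤ i) (hi : i ≤ k + 1) (hj : j < 2 ^ i) :
    jumpMass k i j = ((2 : ℝ≥0∞) ^ i)⁻¹ := by
  obtain ⟨i, rfl⟩ := Nat.exists_eq_add_of_le' h2
  rw [jumpMass, Nat.add_sub_assoc (by norm_num), avgI_sub_avgI_div_two hi hj, abs_neg_one_pow,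
    one_mul, zpow_neg, zpow_natCast, ENNReal.ofReal_inv_of_pos (by positivity),
    ENNReal.ofReal_pow (by norm_num), ENNReal.ofReal_ofNat]

theorem le_tsum_jumpMass (k : ℕ) :
    (k : ℝ≥0∞) ≤
      ∑' p : {p : ℕ × ℕ // 0 < p.1 ∧ dyI p.1 p.2 ⊆ dyI 0 0}, jumpMass k p.1.1 p.1.2 := by
  set S : Set (ℕ × ℕ) := {p | 0 < p.1 ∧ dyI p.1 p.2 ⊆ dyI 0 0}
  have hS : ∀ i j, 0 < i → j < 2 ^ i → (i, j) ∈ S := fun i j hi hj =>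
    ⟨hi, by simpa [Nat.div_eq_of_lt hj] using dyI_subset_dyI_div (Nat.zero_le i) j⟩
  have hlevel : ∀ i ∈ Finset.Icc 2 (k + 1),
      ∑ j ∈ Finset.range (2 ^ i), S.indicator (fun p => jumpMass k p.1 p.2) (i, j) = 1 := by
    intro i hi
    rw [Finset.mem_Icc] at hi
    rw [Finset.sum_congr rfl fun j hj => by
      rw [indicator_of_mem (hS i j (by omega) (Finset.mem_range.1 hj)),
        jumpMass_eq hi.1 hi.2 (Finset.mem_range.1 hj)]]
    rw [Finset.sum_const, Finset.card_range, nsmul_eq_mul, Nat.cast_pow, Nat.cast_ofNat,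
      ENNReal.mul_inv_cancel (by positivity) (by simp)]
  calc (k : ℝ≥0∞) = ∑ i ∈ Finset.Icc 2 (k + 1), ∑ j ∈ Finset.range (2 ^ i),
        S.indicator (fun p => jumpMass k p.1 p.2) (i, j) := by
        simp [Finset.sum_congr rfl hlevel]
    _ ≤ ∑' i, ∑' j, S.indicator (fun p => jumpMass k p.1 p.2) (i, j) :=
        (Finset.sum_le_sum fun i _ => ENNReal.sum_le_tsum _).trans (ENNReal.sum_le_tsum _)
    _ = _ := by rw [← ENNReal.tsum_prod', ← tsum_subtype]; rfl

theorem le_carlesonLac (k : ℕ) {x : ℝ} (hx : x ∈ Ico (0 : ℝ) 1) :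
    (k : ℝ≥0∞) ≤ carlesonLac k x := by
  refine (le_tsum_jumpMass k).trans ?_
  rw [← dyI_zero_zero] at hx
  exact le_iSup₂_of_le 0 0 (le_iSup_of_le hx (by rw [pow_zero, one_mul]))

end Lacunary

open Lacunary

/-- the lacunary counterexample: `‖g‖_{L²(0,1)} = √k` while
`C(∇u)(x) ≳ k` for every `x ∈ (0,1)`; hence `‖C(∇u)‖₂ / ‖g‖₂ ≳ √k` is unbounded in `k`. -/
theorem stmt17 :
    ∃ c : ℝ, 0 < c ∧ ∀ k : ℕ, 1 ≤ k →
      (∫ x in Set.Ioo (0:ℝ) 1, (lacg k x) ^ 2 = (k : ℝ)) ∧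
      ∀ x ∈ Set.Ioo (0:ℝ) 1, ENNReal.ofReal (c * k) ≤ carlesonLac k x := by
  refine ⟨1, one_pos, fun k _ => ⟨setIntegral_Ioo_lacg_sq k, fun x hx => ?_⟩⟩
  rw [one_mul, ENNReal.ofReal_natCast]
  exact le_carlesonLac k (Ioo_subset_Ico_self hx)
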